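/- arXiv:1201.3613 — 3 statements merged into one kernel-verified Lean document; each statement's English description precedes it below -/
import Mathlib

section
/- Let Γ be a finite oriented graph with two spinors z_e, z_{e⁻¹} ∈ ℂ² attached to each edge e, and let X be the associated block matrix. Then the matrix 1 + X is a scalar loop matrix: for every finite sequence of vertex indices L = (i_1,…,i_k), the 2×2 matrix ½((1+X)_{i_1 i_2}(1+X)_{i_2 i_3}⋯(1+X)_{i_k i_1} + (1+X)_{i_1 i_k}(1+X)_{i_k i_{k−1}}⋯(1+X)_{i_2 i_1}) is a scalar multiple of the 2×2 identity. -/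
namespace SpinNetworks

noncomputable section

open Matrix BigOperators

/-- A spinor `z = (α,β)ᵀ ∈ ℂ²`. -/
abbrev Spinor : Type := Fin 2 → ℂ

/-- The covector `[w| = (−β_w, α_w)`. -/
def braVec (w : Spinor) : Spinor := ![-(w 1), w 0]

/-- The 2×2 matrix `|z⟩[w|`. -/
def ketBra (z w : Spinor) : Matrix (Fin 2) (Fin 2) ℂ := Matrix.vecMulVec z (braVec w)

variable {V E : Type} [Fintype V] [DecidableEq V] [Fintype E] [DecidableEq E]

/-- Oriented edges (darts): `(e, true)` is `e`, `(e, false)` is `e⁻¹`. -/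
abbrev Dart (E : Type) : Type := E × Bool

/-- The block matrix `X` of the graph `Γ` with source map `s`, target map `t` and
spinors `z` attached to the darts. -/
def Xmat (s t : E → V) (z : Dart E → Spinor) : Matrix V V (Matrix (Fin 2) (Fin 2) ℂ) :=
  Matrix.of fun i j =>
    (∑ e : E, if s e = i ∧ t e = j then ketBra (z (e, true)) (z (e, false)) else 0)
      - ∑ e : E, if t e = i ∧ s e = j then ketBra (z (e, false)) (z (e, true)) else 0

/-- Ordered product of the entries of `A` along a path:
`pathProd A i [j, k, …, m] = A_{ij} A_{jk} ⋯`. -/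
def pathProd {ι : Type} (A : Matrix ι ι (Matrix (Fin 2) (Fin 2) ℂ)) :
    ι → List ι → Matrix (Fin 2) (Fin 2) ℂ
  | _, [] => 1
  | i, j :: l => A i j * pathProd A j l

/-- Cyclic weight of the sequence `(i, l₁, …, l_k)`:
`loopWeight A i [l₁,…,l_k] = A_{i l₁} A_{l₁ l₂} ⋯ A_{l_k i}`. -/
def loopWeight {ι : Type} (A : Matrix ι ι (Matrix (Fin 2) (Fin 2) ℂ)) (i : ι) (l : List ι) :
    Matrix (Fin 2) (Fin 2) ℂ :=
  pathProd A i (l ++ [i])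

lemma adj2 (M : Matrix (Fin 2) (Fin 2) ℂ) : M.adjugate = M.trace • (1 : Matrix (Fin 2) (Fin 2) ℂ) - M := by
  rw [Matrix.adjugate_fin_two]
  ext i j
  fin_cases i <;> fin_cases j <;>
    simp [Matrix.trace_fin_two, Matrix.one_apply] <;> ring

lemma adj_add (M N : Matrix (Fin 2) (Fin 2) ℂ) :
    (M + N).adjugate = M.adjugate + N.adjugate := by
  rw [adj2, adj2, adj2, Matrix.trace_add, add_smul]; abel

/-- `adjugate` as an additive hom on 2×2 matrices. -/
def adjHom : Matrix (Fin 2) (Fin 2) ℂ →+ Matrix (Fin 2) (Fin 2) ℂ where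
  toFun := Matrix.adjugate
  map_zero' := by simp
  map_add' := adj_add

lemma adj_ketBra (z w : Spinor) : (ketBra z w).adjugate = -ketBra w z := by
  rw [adj2]
  ext i j
  fin_cases i <;> fin_cases j <;>
    simp [ketBra, braVec, Matrix.vecMulVec, Matrix.trace_fin_two, Matrix.one_apply] <;> ring

variable {V E : Type} [Fintype V] [DecidableEq V] [Fintype E] [DecidableEq E] in
lemma adj_X (s t : E → V) (z : Dart E → Spinor) (a b : V) :
    (Xmat s t z a b).adjugate = Xmat s t z b a := by
  have h : ∀ M N : Matrix (Fin 2) (Fin 2) ℂ, (M - N).adjugate = M.adjugate - N.adjugate :=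
    fun M N => map_sub adjHom M N
  have hs : ∀ (f : E → Matrix (Fin 2) (Fin 2) ℂ),
      (∑ e : E, f e).adjugate = ∑ e : E, (f e).adjugate :=
    fun f => map_sum adjHom f Finset.univ
  have hneg : ∀ (c : Prop) [Decidable c] (x : Matrix (Fin 2) (Fin 2) ℂ),
      (if c then -x else 0) = -(if c then x else 0) := by
    intro c _ x; split <;> simp
  have h1 : ∀ e : E, (s e = b ∧ t e = a) ↔ (t e = a ∧ s e = b) := fun e => and_comm
  have h2 : ∀ e : E, (t e = b ∧ s e = a) ↔ (s e = a ∧ t e = b) := fun e => and_comm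
  simp only [Xmat, Matrix.of_apply, h, hs, apply_ite Matrix.adjugate, Matrix.adjugate_zero,
    adj_ketBra, hneg, Finset.sum_neg_distrib, h1, h2]
  abel

variable {V E : Type} [Fintype V] [DecidableEq V] [Fintype E] [DecidableEq E] in
lemma adj_oneX (s t : E → V) (z : Dart E → Spinor) (a b : V) :
    ((1 + Xmat s t z) a b).adjugate = (1 + Xmat s t z) b a := by
  have : (1 + Xmat s t z) a b = (1 : Matrix V V _) a b + Xmat s t z a b := rfl
  rw [this, adj_add, adj_X]
  have h1 : ((1 : Matrix V V (Matrix (Fin 2) (Fin 2) ℂ)) a b).adjugate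
      = (1 : Matrix V V (Matrix (Fin 2) (Fin 2) ℂ)) b a := by
    by_cases hab : a = b
    · subst hab; simp [Matrix.one_apply]
    · simp [Matrix.one_apply, hab, Ne.symm hab]
  rw [h1]; rfl

lemma pathProd_snoc {ι : Type} (A : Matrix ι ι (Matrix (Fin 2) (Fin 2) ℂ)) :
    ∀ (m : List ι) (i b c : ι),
      pathProd A i (m ++ [b] ++ [c]) = pathProd A i (m ++ [b]) * A b c := by
  intro m
  induction m with
  | nil => intro i b c; simp [pathProd, mul_assoc]
  | cons k m' ih =>
    intro i b c
    simp only [List.cons_append, pathProd, List.append_eq]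
    rw [ih, mul_assoc]

lemma adj_pathProd {ι : Type} (A : Matrix ι ι (Matrix (Fin 2) (Fin 2) ℂ))
    (hA : ∀ a b, (A a b).adjugate = A b a) :
    ∀ (l : List ι) (i j : ι),
      (pathProd A i (l ++ [j])).adjugate = pathProd A j (l.reverse ++ [i]) := by
  intro l
  induction l with
  | nil => intro i j; simp [pathProd, hA]
  | cons k l' ih =>
    intro i j
    have : pathProd A i ((k :: l') ++ [j]) = A i k * pathProd A k (l' ++ [j]) := rfl
    rw [this, Matrix.adjugate_mul_distrib, ih, hA]
    have : (k :: l').reverse ++ [i] = l'.reverse ++ [k] ++ [i] := by simp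
    rw [this, pathProd_snoc]

/-- `1 + X` is a scalar loop matrix: for every finite sequence of vertices
`L = (i, l₁, …, l_k)` the matrix
`½(A_{i l₁} A_{l₁ l₂} ⋯ A_{l_k i} + A_{i l_k} A_{l_k l_{k-1}} ⋯ A_{l₁ i})`, where `A = 1 + X`,
is a scalar multiple of the 2×2 identity. -/
theorem one_add_X_isScalarLoop (s t : E → V) (z : Dart E → Spinor) :
    ∀ (i : V) (l : List V), ∃ c : ℂ,
      (2 : ℂ)⁻¹ • (loopWeight (1 + Xmat s t z) i l + loopWeight (1 + Xmat s t z) i l.reverse)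
        = c • (1 : Matrix (Fin 2) (Fin 2) ℂ) := by
  intro i l
  set A := 1 + Xmat s t z with hA
  have hadj : ∀ a b, (A a b).adjugate = A b a := adj_oneX s t z
  have hrev : loopWeight A i l.reverse = (loopWeight A i l).adjugate := by
    rw [loopWeight, loopWeight, adj_pathProd A hadj]
  refine ⟨(2 : ℂ)⁻¹ * (loopWeight A i l).trace, ?_⟩
  rw [hrev, adj2]
  rw [add_sub_cancel, smul_smul]


end
end SpinNetworks
end

section
/- Let A be an n×n scalar loop matrix whose entries are 2×2 complex matrices and suppose A_{11} = a·1₂ with a ≠ 0. Then the (n−1)×(n−1) matrix B of 2×2 blocks defined by B_{ij} = A_{ij} − A_{i1} A_{11}⁻¹ A_{1j} for 2 ≤ i, j ≤ n is again a scalar loop matrix. -/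
namespace SpinNetworks

noncomputable section

open Matrix BigOperators

/-- `A` is a scalar loop matrix: `S(L) = ½(W(L) + W(L⁻¹))` is scalar for every loop `L`. -/
def IsScalarLoop {ι : Type} (A : Matrix ι ι (Matrix (Fin 2) (Fin 2) ℂ)) : Prop :=
  ∀ (i : ι) (l : List ι), ∃ c : ℂ,
    (2 : ℂ)⁻¹ • (loopWeight A i l + loopWeight A i l.reverse)
      = c • (1 : Matrix (Fin 2) (Fin 2) ℂ)

/-!
Write `A'ᵢⱼ = Aᵢⱼ + r Aᵢ₀A₀ⱼ`. Expanding every factor of a path product of `A'` expresses it as a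
combination of path products of `A` along the same path with the vertex `0` inserted at some
of its steps, and the same choice of insertions in the reversed path yields exactly the reversed
paths. Hence `W'(L) + W'(L⁻¹)` is a combination of sums `W(M) + W(M⁻¹)`, all scalar. The Schur
complement is the case `r = -a⁻¹`, restricted to the indices `2, …, n`.
-/

variable {ι : Type}

local notation "M₂" => Matrix (Fin 2) (Fin 2) ℂ

lemma pathProd_append_pair (A : Matrix ι ι M₂) (l : List ι) (i j k : ι) :
    pathProd A i (l ++ [j, k]) = pathProd A i (l ++ [j]) * A j k := by
  induction l generalizing i with
  | nil => simp [pathProd]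
  | cons x t ih => simp only [List.cons_append, pathProd, ih, mul_assoc]

lemma pathProd_submatrix {κ : Type} (A : Matrix ι ι M₂) (f : κ → ι) (i : κ) (l : List κ) :
    pathProd (A.submatrix f f) i l = pathProd A (f i) (l.map f) := by
  induction l generalizing i with
  | nil => rfl
  | cons j t ih => simp only [pathProd, List.map_cons, submatrix_apply, ih]

lemma isScalarLoop_iff (A : Matrix ι ι M₂) :
    IsScalarLoop A ↔
      ∀ i l, loopWeight A i l + loopWeight A i l.reverse ∈ ℂ ∙ (1 : M₂) := by
  simp only [IsScalarLoop, Submodule.mem_span_singleton]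
  refine forall₂_congr fun i l => ⟨fun ⟨c, hc⟩ => ⟨2 * c, ?_⟩, fun ⟨c, hc⟩ => ⟨2⁻¹ * c, ?_⟩⟩
  · rw [mul_smul, ← hc, smul_inv_smul₀ two_ne_zero]
  · rw [mul_smul, hc]

lemma IsScalarLoop.submatrix {κ : Type} {A : Matrix ι ι M₂} (hA : IsScalarLoop A) (f : κ → ι) :
    IsScalarLoop (A.submatrix f f) := by
  intro i l
  simpa only [loopWeight, pathProd_submatrix, List.map_append, List.map_reverse, List.map_cons,
    List.map_nil] using hA (f i) (l.map f)

def pathPair (A : Matrix ι ι M₂) (i j : ι) (m : List ι) : M₂ × M₂ :=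
  (pathProd A i (m ++ [j]), pathProd A j (m.reverse ++ [i]))

lemma pathPair_cons (A : Matrix ι ι M₂) (i j x : ι) (m : List ι) :
    pathPair A i j (x :: m) =
      (A i x * (pathPair A x j m).1, (pathPair A x j m).2 * A x i) := by
  simp [pathPair, pathProd, pathProd_append_pair]

def pivotUpdate (A : Matrix ι ι M₂) (z : ι) (r : ℂ) : Matrix ι ι M₂ :=
  of fun i j => A i j + r • (A i z * A z j)

lemma pathPair_add_smul_mem_span (A : Matrix ι ι M₂) (i j z : ι) (r : ℂ) (m : List ι) :
    pathPair A i j m + r • pathPair A i j (z :: m) ∈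
      Submodule.span ℂ (Set.range (pathPair A i j)) :=
  add_mem (Submodule.subset_span ⟨_, rfl⟩)
    (Submodule.smul_mem _ _ (Submodule.subset_span ⟨_, rfl⟩))

lemma pathPair_pivotUpdate_mem_span (A : Matrix ι ι M₂) (z : ι) (r : ℂ) (l : List ι) (i j : ι) :
    pathPair (pivotUpdate A z r) i j l ∈ Submodule.span ℂ (Set.range (pathPair A i j)) := by
  induction l generalizing i with
  | nil =>
    have expand : pathPair (pivotUpdate A z r) i j [] =
        pathPair A i j [] + r • pathPair A i j [z] := by
      simp [pathPair, pathProd, pivotUpdate]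
    exact expand ▸ pathPair_add_smul_mem_span A i j z r []
  | cons x t ih =>
    let step : M₂ × M₂ →ₗ[ℂ] M₂ × M₂ :=
      (LinearMap.mulLeft ℂ (pivotUpdate A z r i x)).prodMap
        (LinearMap.mulRight ℂ (pivotUpdate A z r x i))
    have expand (m : List ι) :
        step (pathPair A x j m) = pathPair A i j (x :: m) + r • pathPair A i j (z :: x :: m) := by
      simp [step, pathPair_cons, pivotUpdate, add_mul, mul_add, mul_assoc]
    have hstep : Submodule.map step (Submodule.span ℂ (Set.range (pathPair A x j))) ≤
        Submodule.span ℂ (Set.range (pathPair A i j)) := by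
      rw [Submodule.map_span_le]
      rintro _ ⟨m, rfl⟩
      exact expand m ▸ pathPair_add_smul_mem_span A i j z r (x :: m)
    rw [pathPair_cons]
    exact hstep (Submodule.mem_map_of_mem (ih x))

theorem IsScalarLoop.pivotUpdate {A : Matrix ι ι M₂} (hA : IsScalarLoop A) (z : ι) (r : ℂ) :
    IsScalarLoop (pivotUpdate A z r) := by
  rw [isScalarLoop_iff] at hA ⊢
  intro i l
  have hspan : Submodule.span ℂ (Set.range (pathPair A i i)) ≤
      Submodule.comap (LinearMap.fst ℂ M₂ M₂ + LinearMap.snd ℂ M₂ M₂) (ℂ ∙ (1 : M₂)) := by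
    rw [Submodule.span_le]
    rintro _ ⟨m, rfl⟩
    exact hA i m
  exact hspan (pathPair_pivotUpdate_mem_span A z r l i i)

theorem schurComplement_isScalarLoop_general {n : ℕ}
    (A : Matrix (Fin (n + 1)) (Fin (n + 1)) (Matrix (Fin 2) (Fin 2) ℂ))
    (hA : IsScalarLoop A) (a : ℂ) :
    IsScalarLoop (Matrix.of fun i j : Fin n =>
      A i.succ j.succ - a⁻¹ • (A i.succ 0 * A 0 j.succ)) := by
  have hB : (Matrix.of fun i j : Fin n => A i.succ j.succ - a⁻¹ • (A i.succ 0 * A 0 j.succ)) =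
      (pivotUpdate A 0 (-a⁻¹)).submatrix Fin.succ Fin.succ := by
    ext1 i j
    simp [pivotUpdate, sub_eq_add_neg]
  rw [hB]
  exact (hA.pivotUpdate 0 (-a⁻¹)).submatrix Fin.succ

/-- if `A` is an `(n+1) × (n+1)` scalar loop matrix of 2×2 blocks with
`A₁₁ = a·1₂`, `a ≠ 0`, then the matrix `B` with `B_{ij} = A_{ij} − A_{i1} A₁₁⁻¹ A_{1j}`
(indices `2 ≤ i, j ≤ n+1`) is again a scalar loop matrix. -/
theorem schurComplement_isScalarLoop {n : ℕ}
    (A : Matrix (Fin (n + 1)) (Fin (n + 1)) (Matrix (Fin 2) (Fin 2) ℂ))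
    (hA : IsScalarLoop A) (a : ℂ) (ha : a ≠ 0)
    (h11 : A 0 0 = a • (1 : Matrix (Fin 2) (Fin 2) ℂ)) :
    IsScalarLoop (Matrix.of fun i j : Fin n =>
      A i.succ j.succ - a⁻¹ • (A i.succ 0 * A 0 j.succ)) :=
  schurComplement_isScalarLoop_general A hA a

end
end SpinNetworks
end

section
/- Let T be the 4×4 antisymmetric complex matrix with entries τ_ij (τ_ij = −τ_ji, τ_ii = 0), and set R = τ_12 τ_34 + τ_13 τ_42 + τ_14 τ_23. Then det(1 + T T̄) = (1 − Σ_{i<j} |τ_ij|² + |R|²)², where T̄ is the entrywise complex conjugate of T. -/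
/-!
Both sides are polynomials in the six entries of `T` and their conjugates. Treating the
conjugates as the entries of a second, independent antisymmetric matrix `B`, the identity
`det (1 + A B) = (1 + tr (A B) / 2 + Pf A · Pf B) ^ 2` holds for any two antisymmetric `4 × 4`
matrices over a commutative ring, and is checked by expanding the determinant. With `B = T̄`,
`tr (T T̄) / 2 = -∑_{i<j} |τ_ij|²` and `Pf T̄ = R̄`.
-/

namespace SpinNetworks

noncomputable section

open Matrix BigOperators

variable {α : Type*} [CommRing α]

def skew4 (a b c d e f : α) : Matrix (Fin 4) (Fin 4) α :=
  !![0, a, b, c; -a, 0, d, e; -b, -d, 0, f; -c, -e, -f, 0]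

def pfaffian4 (A : Matrix (Fin 4) (Fin 4) α) : α :=
  A 0 1 * A 2 3 + A 0 2 * A 3 1 + A 0 3 * A 1 2

theorem det_one_add_skew4_mul_skew4 (a b c d e f a' b' c' d' e' f' : α) :
    det (1 + skew4 a b c d e f * skew4 a' b' c' d' e' f') =
      (1 - (a * a' + b * b' + c * c' + d * d' + e * e' + f * f')
        + (a * f - b * e + c * d) * (a' * f' - b' * e' + c' * d')) ^ 2 := by
  simp [skew4, det_succ_row_zero, Fin.sum_univ_succ, Fin.succAbove, one_apply]
  ring

theorem eq_skew4_of_transpose_eq_neg [NoZeroDivisors α] [CharZero α]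
    {A : Matrix (Fin 4) (Fin 4) α} (hA : Aᵀ = -A) :
    A = skew4 (A 0 1) (A 0 2) (A 0 3) (A 1 2) (A 1 3) (A 2 3) := by
  have hneg (i j : Fin 4) : A j i = -A i j := congr_fun₂ hA i j
  have hdiag (i : Fin 4) : A i i = 0 := CharZero.eq_neg_self_iff.mp (hneg i i)
  ext i j
  fin_cases i <;> fin_cases j <;> simp [skew4, hdiag] <;> exact hneg _ _

theorem pfaffian4_map {S : Type*} [CommRing S] (A : Matrix (Fin 4) (Fin 4) α) (f : α →+* S) :
    pfaffian4 (A.map f) = f (pfaffian4 A) := by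
  simp [pfaffian4]

theorem sum_Ioi_fin_four {M : Type*} [AddCommMonoid M] (g : Fin 4 → Fin 4 → M) :
    ∑ i, ∑ j ∈ Finset.Ioi i, g i j = g 0 1 + g 0 2 + g 0 3 + g 1 2 + g 1 3 + g 2 3 := by
  have h0 : Finset.Ioi (0 : Fin 4) = {1, 2, 3} := by decide
  have h1 : Finset.Ioi (1 : Fin 4) = {2, 3} := by decide
  have h2 : Finset.Ioi (2 : Fin 4) = {3} := by decide
  have h3 : Finset.Ioi (3 : Fin 4) = ∅ := by decide
  simp [Fin.sum_univ_four, h0, h1, h2, h3, add_assoc]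

theorem det_one_add_mul_of_transpose_eq_neg [NoZeroDivisors α] [CharZero α]
    {A B : Matrix (Fin 4) (Fin 4) α} (hA : Aᵀ = -A) (hB : Bᵀ = -B) :
    det (1 + A * B) =
      (1 - ∑ i, ∑ j ∈ Finset.Ioi i, A i j * B i j + pfaffian4 A * pfaffian4 B) ^ 2 := by
  rw [sum_Ioi_fin_four, eq_skew4_of_transpose_eq_neg hA, eq_skew4_of_transpose_eq_neg hB,
    det_one_add_skew4_mul_skew4]
  simp [pfaffian4, skew4]
  ring

/-- for a 4×4 antisymmetric complex matrix `T = (τ_ij)` with Pfaffian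
`R = τ₁₂τ₃₄ + τ₁₃τ₄₂ + τ₁₄τ₂₃`, one has
`det(1 + T T̄) = (1 − Σ_{i<j} |τ_ij|² + |R|²)²`. -/
theorem det_one_add_mul_conj_four (T : Matrix (Fin 4) (Fin 4) ℂ) (hT : Tᵀ = -T)
    (R : ℂ) (hR : R = T 0 1 * T 2 3 + T 0 2 * T 3 1 + T 0 3 * T 1 2) :
    (1 + T * T.map (starRingEnd ℂ)).det
      = ((1 : ℂ) - (∑ i : Fin 4, ∑ j ∈ Finset.Ioi i, (Complex.normSq (T i j) : ℂ))
          + (Complex.normSq R : ℂ)) ^ 2 := by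
  have hTbar : (T.map (starRingEnd ℂ))ᵀ = -T.map (starRingEnd ℂ) := by
    rw [← transpose_map, hT, Matrix.map_neg _ (map_neg _)]
  have hRpf : R = pfaffian4 T := hR
  rw [det_one_add_mul_of_transpose_eq_neg hT hTbar, pfaffian4_map, ← hRpf, Complex.mul_conj]
  simp only [map_apply, Complex.mul_conj]

end
end SpinNetworks
end
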